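/- Let N ≥ 1, let R be a commutative ring, and let A be the evolution algebra over R on the finite basis x_1, …, x_N with structure coefficient matrix C. For α ∈ R^N, let C_α denote the N×N matrix whose (k,i)-entry is α_i · C(k,i). Then A is nil (every element has some vanishing principal power) if and only if for every α ∈ R^N there exists a positive integer k_α such that C_α^{k_α} · α^T = 0 (the matrix power C_α^{k_α} applied to the vector α is the zero vector). (Theorem 2.3) -/
import Mathlib


open Matrix

/-!
Finite-dimensional evolution algebra over a commutative ring `R` on the basis
`x_1, …, x_N` (the standard basis of `Fin N → R`), with structure coefficient
matrix `C`: `x_i · x_i = ∑_k C(k,i) • x_k` and `x_i · x_j = 0` for `i ≠ j`;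
concretely `(a · b)(k) = ∑_i a(i) * b(i) * C(k,i)`.
-/
def evolMulFin {R : Type*} [CommRing R] {N : ℕ} (C : Matrix (Fin N) (Fin N) R)
    (a b : Fin N → R) : Fin N → R :=
  fun k => ∑ i, a i * b i * C k i

/-- Principal powers: `ppow mul a n = aⁿ` for `n ≥ 1`, defined by
`a^1 = a` and `a^{n+1} = a^n · a`. -/
def ppow {A : Type*} (mul : A → A → A) (a : A) : ℕ → A
  | 0 => a
  | 1 => a
  | n + 2 => mul (ppow mul a (n + 1)) a

/-- Theorem 2.3: For `α ∈ R^N`, let `C_α` be the matrix with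
`(k,i)`-entry `α i * C k i`.  The evolution algebra `A` is nil (every element
has a vanishing principal power) if and only if for every `α ∈ R^N` there is a
positive integer `k_α` with `C_α^{k_α} ⬝ α = 0`. -/
theorem nil_iff_matrix_condition {R : Type*} [CommRing R] {N : ℕ} (hN : 1 ≤ N)
    (C : Matrix (Fin N) (Fin N) R) :
    (∀ a : Fin N → R, ∃ n : ℕ, 1 ≤ n ∧ ppow (evolMulFin C) a n = 0) ↔
    (∀ α : Fin N → R, ∃ k : ℕ, 0 < k ∧
      (Matrix.of fun k' i => α i * C k' i) ^ k *ᵥ α = 0) := by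
  have key : ∀ (a : Fin N → R) (n : ℕ),
      ppow (evolMulFin C) a (n + 1) = (Matrix.of fun k' i => a i * C k' i) ^ n *ᵥ a := by
    intro a n
    induction n with
    | zero => simp [ppow]
    | succ m ih =>
      rw [pow_succ', ← mulVec_mulVec, ← ih]
      funext k
      show evolMulFin C (ppow (evolMulFin C) a (m + 1)) a k = _
      simp only [evolMulFin, mulVec, dotProduct, Matrix.of_apply]
      exact Finset.sum_congr rfl fun i _ => by ring
  constructor
  · intro h α
    obtain ⟨n, hn, hz⟩ := h α
    rcases n with _ | _ | m
    · omega
    · -- n = 1 : α = 0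
      refine ⟨1, one_pos, ?_⟩
      have : α = 0 := hz
      simp [this]
    · refine ⟨m + 1, Nat.succ_pos _, ?_⟩
      rw [← key]; exact hz
  · intro h a
    obtain ⟨k, hk, hz⟩ := h a
    exact ⟨k + 1, by omega, by rw [key]; exact hz⟩
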